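/- Let (M,ρ) be a metric space and equip ℝ × M with the metric d((x,a),(y,b)) = max(|x−y|, ρ(a,b)). Then for every δ > 0 there is a constant C > 0 (depending only on δ) such that for every Borel set A ⊆ ℝ and every B ⊆ M with h^δ(B) < ∞, one has h^{δ+1}(A × B) ≤ C · h^1(A) · h^δ(B), where h^{δ+1} is computed in (ℝ × M, d), h^1 in ℝ with the standard metric, and h^δ in (M,ρ). -/

import Mathlib

open scoped ENNReal NNReal
open MeasureTheory Set

noncomputable section

/-- A pseudometric on `M`. -/
structure IsPseudoMetric {M : Type*} (ρ : M → M → ℝ) : Prop where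
  nonneg : ∀ x y, 0 ≤ ρ x y
  refl : ∀ x, ρ x x = 0
  symm : ∀ x y, ρ x y = ρ y x
  triangle : ∀ x y z, ρ x z ≤ ρ x y + ρ y z

/-- A metric on `M`. -/
structure IsMetric {M : Type*} (ρ : M → M → ℝ) extends IsPseudoMetric ρ : Prop where
  eq_of_eq_zero : ∀ x y, ρ x y = 0 → x = y

/-- The diameter of a set w.r.t. a (pseudo)metric `ρ`, valued in `ℝ≥0∞`. -/
def ediam {M : Type*} (ρ : M → M → ℝ) (S : Set M) : ℝ≥0∞ :=
  ⨆ x ∈ S, ⨆ y ∈ S, ENNReal.ofReal (ρ x y)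

/-- The `δ`-dimensional Hausdorff outer measure of `A` w.r.t. the (pseudo)metric `ρ`:
`h^δ(A) = lim_{ε→0⁺} inf{ Σᵢ diam(Sᵢ)^δ : A ⊆ ⋃ᵢ Sᵢ, diam(Sᵢ) ≤ ε }` (the limit over
`ε → 0⁺` of the monotone quantity being its supremum over `ε > 0`). -/
def hMeas {M : Type*} (ρ : M → M → ℝ) (δ : ℝ) (A : Set M) : ℝ≥0∞ :=
  ⨆ (ε : ℝ≥0∞) (_ : 0 < ε), ⨅ (S : ℕ → Set M) (_ : A ⊆ ⋃ i, S i)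
    (_ : ∀ i, ediam ρ (S i) ≤ ε), ∑' i, ediam ρ (S i) ^ δ

/-- The Hausdorff dimension `D_h(A) = inf{δ > 0 : h^δ(A) = 0}` (valued in `ℝ≥0∞`,
with `∞` if no such `δ` exists). -/
def hDim {M : Type*} (ρ : M → M → ℝ) (A : Set M) : ℝ≥0∞ :=
  ⨅ (δ : ℝ) (_ : 0 < δ) (_ : hMeas ρ δ A = 0), ENNReal.ofReal δ

/-- The divergence of two pseudometrics:
`κ = sup_{x,y} |ρ₁(x,y) − ρ₂(x,y)| / (ρ₁(x,y) + ρ₂(x,y))` (with `0/0 = 0`, which is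
Lean's convention for division). -/
def divergence {M : Type*} (ρ₁ ρ₂ : M → M → ℝ) : ℝ :=
  ⨆ q : M × M, |ρ₁ q.1 q.2 - ρ₂ q.1 q.2| / (ρ₁ q.1 q.2 + ρ₂ q.1 q.2)

/-- For every `δ > 0` there is `C > 0` (depending only on `δ`) such that for any metric
space `(M,ρ)`, any Borel `A ⊆ ℝ` and any `B ⊆ M` with `h^δ(B) < ∞`,
`h^{δ+1}(A × B) ≤ C·h^1(A)·h^δ(B)`, where `ℝ × M` carries the metric
`d((x,a),(y,b)) = max(|x−y|, ρ(a,b))`. -/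
lemma iSup_nonempty_rpow {X : Type*} [PseudoEMetricSpace X] {d : ℝ} (hd : 0 < d) (s : Set X) :
    (⨆ _ : s.Nonempty, EMetric.diam s ^ d) = EMetric.diam s ^ d := by
  rcases s.eq_empty_or_nonempty with rfl | h
  · simp [Set.not_nonempty_empty, ENNReal.zero_rpow_of_pos hd, EMetric.diam]
  · simp [h]

lemma diam_prod_le {X Y : Type*} [PseudoEMetricSpace X] [PseudoEMetricSpace Y]
    (s : Set X) (t : Set Y) : EMetric.diam (s ×ˢ t) ≤ max (EMetric.diam s) (EMetric.diam t) := by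
  apply EMetric.diam_le
  rintro ⟨x1, y1⟩ ⟨hx1, hy1⟩ ⟨x2, y2⟩ ⟨hx2, hy2⟩
  rw [Prod.edist_eq]
  exact max_le_max (EMetric.edist_le_diam_of_mem hx1 hx2) (EMetric.edist_le_diam_of_mem hy1 hy2)

lemma tsum_ofReal_halves (c : ℝ) (hc : 0 ≤ c) :
    ∑' k : ℕ, ENNReal.ofReal (c * (1/2) ^ k) = 2 * ENNReal.ofReal c := by
  have h1 : ∀ k : ℕ, ENNReal.ofReal (c * (1/2) ^ k) = ENNReal.ofReal c * (2⁻¹ : ℝ≥0∞) ^ k := by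
    intro k
    rw [ENNReal.ofReal_mul hc, ENNReal.ofReal_pow (by norm_num)]
    congr 2
    rw [show ((1:ℝ)/2) = (2:ℝ)⁻¹ by norm_num, ENNReal.ofReal_inv_of_pos two_pos,
      ENNReal.ofReal_ofNat]
  simp only [h1]
  rw [ENNReal.tsum_mul_left, ENNReal.tsum_geometric, mul_comm]
  congr 1
  rw [ENNReal.one_sub_inv_two]
  simp

lemma exists_cover {X : Type*} [EMetricSpace X] [MeasurableSpace X] [BorelSpace X]
    {d : ℝ} (hd : 0 < d) {ε : ℝ≥0∞} (hε : 0 < ε) (s : Set X) (hs : μH[d] s ≠ ∞)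
    {η : ℝ≥0∞} (hη : η ≠ 0) :
    ∃ t : ℕ → Set X, (s ⊆ ⋃ n, t n) ∧ (∀ n, EMetric.diam (t n) ≤ ε) ∧
      ∑' n, EMetric.diam (t n) ^ d ≤ μH[d] s + η := by
  have hlt : (⨅ (t : ℕ → Set X) (_ : s ⊆ ⋃ n, t n) (_ : ∀ n, EMetric.diam (t n) ≤ ε),
      ∑' n, ⨆ _ : (t n).Nonempty, EMetric.diam (t n) ^ d) < μH[d] s + η := by
    refine lt_of_le_of_lt ?_ (ENNReal.lt_add_right hs hη)
    rw [Measure.hausdorffMeasure_apply]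
    exact le_iSup₂ (f := fun (r : ℝ≥0∞) (_ : 0 < r) =>
      ⨅ (t : ℕ → Set X) (_ : s ⊆ ⋃ n, t n) (_ : ∀ n, EMetric.diam (t n) ≤ r),
        ∑' n, ⨆ _ : (t n).Nonempty, EMetric.diam (t n) ^ d) ε hε
  obtain ⟨t, ht⟩ := iInf_lt_iff.mp hlt
  obtain ⟨h1, ht⟩ := iInf_lt_iff.mp ht
  obtain ⟨h2, ht⟩ := iInf_lt_iff.mp ht
  refine ⟨t, h1, h2, ?_⟩
  calc ∑' n, EMetric.diam (t n) ^ d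
      = ∑' n, ⨆ _ : (t n).Nonempty, EMetric.diam (t n) ^ d :=
        tsum_congr fun n => (iSup_nonempty_rpow hd (t n)).symm
    _ ≤ μH[d] s + η := ht.le

lemma arith {a b : ℝ≥0∞} (ha : a ≠ ∞) (hb : b ≠ ∞) {ζ : ℝ≥0} (hζ : 0 < ζ) :
    ∃ η : ℝ, 0 < η ∧
      3 * (a + 3 * ENNReal.ofReal η) * (b + ENNReal.ofReal η) + 4 * ENNReal.ofReal η
        ≤ 3 * a * b + ζ := by
  set K : ℝ≥0∞ := 3 * a + 9 * b + 16 with hK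
  have hK0 : K ≠ 0 := by simp [hK]
  have hKt : K ≠ ∞ := by
    refine ENNReal.add_ne_top.2 ⟨ENNReal.add_ne_top.2 ⟨?_, ?_⟩, by norm_num⟩
    · exact ENNReal.mul_ne_top (by norm_num) ha
    · exact ENNReal.mul_ne_top (by norm_num) hb
  set x : ℝ≥0∞ := min 1 (ζ / K) with hx
  have hxt : x ≠ ∞ := (min_le_left _ _).trans_lt ENNReal.one_lt_top |>.ne
  have hx0 : x ≠ 0 :=
    (lt_min one_pos (ENNReal.div_pos (by exact_mod_cast hζ.ne') hKt)).ne'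
  refine ⟨x.toReal, ENNReal.toReal_pos hx0 hxt, ?_⟩
  rw [ENNReal.ofReal_toReal hxt]
  have hexp : 3 * (a + 3 * x) * (b + x) + 4 * x
      = 3 * a * b + (3 * a * x + 9 * x * b + (9 * x * x + 4 * x)) := by ring
  rw [hexp]
  refine add_le_add_right ?_ _
  have h9 : 9 * x * x + 4 * x ≤ 13 * x := by
    have : 9 * x * x ≤ 9 * x := by
      calc 9 * x * x ≤ 9 * 1 * x := by
            gcongr
            exact min_le_left _ _
        _ = 9 * x := by ring
    calc 9 * x * x + 4 * x ≤ 9 * x + 4 * x := add_le_add_left this _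
      _ = 13 * x := by ring
  calc 3 * a * x + 9 * x * b + (9 * x * x + 4 * x)
      ≤ 3 * a * x + 9 * x * b + 13 * x := add_le_add_right h9 _
    _ = x * (3 * a + 9 * b + 13) := by ring
    _ ≤ (ζ / K) * K := by
        gcongr
        · exact min_le_right _ _
        · rw [hK]
          refine add_le_add_right ?_ _
          norm_num
    _ ≤ ζ := by
        rw [ENNReal.div_mul_cancel hK0 hKt]

lemma hMeas_eq {M : Type*} [MetricSpace M] [MeasurableSpace M] [BorelSpace M]
    (ρ : M → M → ℝ) (hρ : ∀ x y, ρ x y = dist x y) {d : ℝ} (hd : 0 < d) (s : Set M) :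
    hMeas ρ d s = μH[d] s := by
  have hed : ∀ S : Set M, ediam ρ S = EMetric.diam S := by
    intro S
    unfold ediam EMetric.diam Metric.ediam
    simp only [hρ, ← edist_dist]
  rw [hMeas, Measure.hausdorffMeasure_apply]
  simp only [hed]
  exact iSup_congr fun ε => iSup_congr fun _ => iInf_congr fun t => iInf_congr fun _ =>
    iInf_congr fun _ => tsum_congr fun n => (iSup_nonempty_rpow hd _).symm

set_option maxHeartbeats 2000000 in
lemma core (δ : ℝ) (hδ : 0 < δ) {M : Type*} [MetricSpace M] [MeasurableSpace M] [BorelSpace M]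
    (A : Set ℝ) (B : Set M) (hA : μH[1] A ≠ ∞) (hB : μH[δ] B ≠ ∞) :
    μH[δ + 1] (A ×ˢ B) ≤ 3 * μH[1] A * μH[δ] B := by
  have hδ1 : (0:ℝ) < δ + 1 := by linarith
  set a := μH[1] A with ha
  set b := μH[δ] B with hb
  have key : ∀ r : ℝ≥0∞, 0 < r → ∀ η : ℝ, 0 < η →
      (⨅ (t : ℕ → Set (ℝ × M)) (_ : A ×ˢ B ⊆ ⋃ n, t n) (_ : ∀ n, EMetric.diam (t n) ≤ r),
        ∑' n, ⨆ _ : (t n).Nonempty, EMetric.diam (t n) ^ (δ + 1))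
      ≤ 3 * (a + 3 * ENNReal.ofReal η) * (b + ENNReal.ofReal η) + 4 * ENNReal.ofReal η := by
    intro r hr η hη
    set η' := ENNReal.ofReal η with hη'def
    have hη'0 : η' ≠ 0 := by simp [hη'def, hη]
    -- the scale
    obtain ⟨e, he, her⟩ : ∃ e : ℝ, 0 < e ∧ ENNReal.ofReal e ≤ r := by
      refine ⟨(min r 1).toReal, ?_, ?_⟩
      · exact ENNReal.toReal_pos (lt_min hr zero_lt_one).ne'
          ((min_le_right _ _).trans_lt ENNReal.one_lt_top).ne
      · rw [ENNReal.ofReal_toReal ((min_le_right _ _).trans_lt ENNReal.one_lt_top).ne]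
        exact min_le_left _ _
    -- cover of A
    obtain ⟨t, htA, htd, htsum⟩ := exists_cover one_pos
      (ε := ENNReal.ofReal (e/2)) (ENNReal.ofReal_pos.2 (by linarith)) A hA hη'0
    simp only [ENNReal.rpow_one] at htsum
    have htne : ∀ k, EMetric.diam (t k) ≠ ⊤ :=
      fun k => ((htd k).trans_lt ENNReal.ofReal_lt_top).ne
    set w : ℕ → ℝ := fun k => (1/2 : ℝ) ^ k with hw
    have hwpos : ∀ k, 0 < w k := fun k => by positivity
    set len : ℕ → ℝ := fun k => max (Metric.diam (t k)) (min (e/2) (η * w k)) with hlen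
    have hlenpos : ∀ k, 0 < len k :=
      fun k => lt_max_of_lt_right (lt_min (by linarith) (by positivity))
    have hdiamtk : ∀ k, Metric.diam (t k) ≤ e / 2 :=
      fun k => ENNReal.toReal_le_of_le_ofReal (by linarith) (htd k)
    have hlenle : ∀ k, len k ≤ e / 2 := fun k => max_le (hdiamtk k) (min_le_left _ _)
    have hlendiam : ∀ k, ENNReal.ofReal (len k)
        ≤ EMetric.diam (t k) + ENNReal.ofReal (η * w k) := by
      intro k
      refine le_trans (ENNReal.ofReal_le_ofReal (max_le
        (le_add_of_nonneg_right (by positivity))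
        ((min_le_right _ _).trans (le_add_of_nonneg_left Metric.diam_nonneg)))) ?_
      rw [ENNReal.ofReal_add Metric.diam_nonneg (by positivity)]
      exact add_le_add_left ENNReal.ofReal_toReal_le _
    -- covers of B, one for each k
    have hSex : ∀ k, ∃ S : ℕ → Set M, (B ⊆ ⋃ m, S m) ∧
        (∀ m, EMetric.diam (S m) ≤ ENNReal.ofReal (len k)) ∧
        ∑' m, EMetric.diam (S m) ^ δ ≤ b + η' :=
      fun k => exists_cover hδ (ENNReal.ofReal_pos.2 (hlenpos k)) B hB hη'0
    choose S hSB hSd hSsum using hSex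
    have hSne : ∀ k m, EMetric.diam (S k m) ≠ ⊤ :=
      fun k m => ((hSd k m).trans_lt ENNReal.ofReal_lt_top).ne
    set d : ℕ → ℕ → ℝ := fun k m => (EMetric.diam (S k m)).toReal with hdd
    have hd0 : ∀ k m, 0 ≤ d k m := fun k m => ENNReal.toReal_nonneg
    have hdlen : ∀ k m, d k m ≤ len k :=
      fun k m => ENNReal.toReal_le_of_le_ofReal (hlenpos k).le (hSd k m)
    set σ : ℕ → ℕ → ℝ :=
      fun k m => min (len k) ((η * w k * w m / (4 * len k + 1)) ^ (1/δ)) with hσ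
    have hσpos : ∀ k m, 0 < σ k m := fun k m =>
      lt_min (hlenpos k) (Real.rpow_pos_of_pos (by positivity) _)
    set tl : ℕ → ℕ → ℝ := fun k m => max (d k m) (σ k m) with htl
    have htlpos : ∀ k m, 0 < tl k m := fun k m => lt_max_of_lt_right (hσpos k m)
    have htllen : ∀ k m, tl k m ≤ len k := fun k m => max_le (hdlen k m) (min_le_left _ _)
    set n : ℕ → ℕ → ℕ := fun k m => ⌊2 * len k / tl k m⌋₊ + 1 with hn
    classical
    -- base points
    have hx0ex : ∀ k, ∃ x : ℝ, (t k).Nonempty → x ∈ t k := by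
      intro k
      rcases (t k).eq_empty_or_nonempty with h | h
      · exact ⟨0, by simp [h]⟩
      · exact ⟨h.choose, fun _ => h.choose_spec⟩
    choose x₀ hx₀ using hx0ex
    -- the pieces
    set P : ℕ × ℕ × ℕ → Set (ℝ × M) := fun p =>
      if (t p.1).Nonempty ∧ p.2.2 < n p.1 p.2.1 then
        (Set.Icc (x₀ p.1 - len p.1 + p.2.2 * tl p.1 p.2.1)
                 (x₀ p.1 - len p.1 + (p.2.2 + 1) * tl p.1 p.2.1)) ×ˢ S p.1 p.2.1
      else ∅ with hP
    set E : ℕ ≃ ℕ × ℕ × ℕ := (Denumerable.eqv (ℕ × ℕ × ℕ)).symm with hE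
    -- diameters of the pieces
    have hPdiam : ∀ p : ℕ × ℕ × ℕ, EMetric.diam (P p) ≤ ENNReal.ofReal (tl p.1 p.2.1) := by
      rintro ⟨k, m, i⟩
      simp only [hP]
      split_ifs with hcond
      · refine (diam_prod_le _ _).trans (max_le ?_ ?_)
        · rw [EMetric.diam, Real.ediam_Icc]
          exact ENNReal.ofReal_le_ofReal (le_of_eq (by ring))
        · rw [← ENNReal.ofReal_toReal (hSne k m)]
          exact ENNReal.ofReal_le_ofReal (le_max_left _ _)
      · simp [EMetric.diam]
    have hPr : ∀ p : ℕ × ℕ × ℕ, EMetric.diam (P p) ≤ r := by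
      intro p
      refine (hPdiam p).trans (le_trans (ENNReal.ofReal_le_ofReal ?_) her)
      have := (htllen p.1 p.2.1).trans (hlenle p.1)
      linarith
    -- coverage
    have hcov : A ×ˢ B ⊆ ⋃ j, P (E j) := by
      rintro ⟨x, y⟩ ⟨hx, hy⟩
      obtain ⟨k, hk⟩ := Set.mem_iUnion.1 (htA hx)
      have hne : (t k).Nonempty := ⟨x, hk⟩
      obtain ⟨m, hm⟩ := Set.mem_iUnion.1 (hSB k hy)
      have hbdd : Bornology.IsBounded (t k) := Metric.isBounded_iff_ediam_ne_top.2 (htne k)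
      have hdist : |x - x₀ k| ≤ len k := by
        have h1 : dist x (x₀ k) ≤ Metric.diam (t k) :=
          Metric.dist_le_diam_of_mem hbdd hk (hx₀ k hne)
        rw [Real.dist_eq] at h1
        exact h1.trans (le_max_left _ _)
      have habs := abs_le.1 hdist
      have h0le : 0 ≤ x - (x₀ k - len k) := by linarith [habs.2]
      have hle2 : x - (x₀ k - len k) ≤ 2 * len k := by linarith [habs.1]
      set i := ⌊(x - (x₀ k - len k)) / tl k m⌋₊ with hi
      refine Set.mem_iUnion.2 ⟨E.symm (k, m, i), ?_⟩
      rw [Equiv.apply_symm_apply]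
      have hilt : i < n k m := by
        have h1 : i ≤ ⌊2 * len k / tl k m⌋₊ := Nat.floor_le_floor (by gcongr)
        have h2 : n k m = ⌊2 * len k / tl k m⌋₊ + 1 := rfl
        omega
      simp only [hP]
      rw [if_pos ⟨hne, hilt⟩]
      rw [Set.mem_prod]
      refine ⟨Set.mem_Icc.2 ⟨?_, ?_⟩, hm⟩
      · have h1 : (i : ℝ) ≤ (x - (x₀ k - len k)) / tl k m := Nat.floor_le (by positivity)
        rw [le_div_iff₀ (htlpos k m)] at h1
        linarith
      · have h1 : (x - (x₀ k - len k)) / tl k m < i + 1 := Nat.lt_floor_add_one _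
        rw [div_lt_iff₀ (htlpos k m)] at h1
        linarith
    -- per (k, m) estimate
    have hPcost0 : ∀ k m i, ¬((t k).Nonempty ∧ i < n k m) →
        EMetric.diam (P (k, m, i)) ^ (δ + 1) = 0 := by
      intro k m i hcond
      simp only [hP]
      rw [if_neg hcond]
      rw [EMetric.diam, EMetric.diam_empty, ENNReal.zero_rpow_of_pos hδ1]
    have h1 : ∀ k m, ∑' i : ℕ, EMetric.diam (P (k, m, i)) ^ (δ + 1)
        ≤ ENNReal.ofReal (3 * len k * d k m ^ δ + η * w k * w m) := by
      intro k m
      have hT := htlpos k m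
      have hL := hlenpos k
      have hTL := htllen k m
      have hrealineq : (n k m : ℝ) * tl k m ^ (δ + 1)
          ≤ 3 * len k * d k m ^ δ + η * w k * w m := by
        have hN : (n k m : ℝ) ≤ 2 * len k / tl k m + 1 := by
          have hfl := Nat.floor_le (by positivity : (0:ℝ) ≤ 2 * len k / tl k m)
          have hnr : (n k m : ℝ) = (⌊2 * len k / tl k m⌋₊ : ℝ) + 1 := by
            rw [hn]; push_cast; ring
          linarith
        have hTδpos : (0:ℝ) < tl k m ^ δ := Real.rpow_pos_of_pos hT δ
        have hstep1 : (n k m : ℝ) * tl k m ^ (δ + 1) ≤ 3 * len k * tl k m ^ δ := by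
          rw [Real.rpow_add hT, Real.rpow_one]
          calc (n k m : ℝ) * (tl k m ^ δ * tl k m)
              ≤ (2 * len k / tl k m + 1) * (tl k m ^ δ * tl k m) := by
                apply mul_le_mul_of_nonneg_right hN (by positivity)
            _ = 2 * len k * tl k m ^ δ + tl k m ^ δ * tl k m := by
                field_simp
            _ ≤ 2 * len k * tl k m ^ δ + tl k m ^ δ * len k := by nlinarith
            _ = 3 * len k * tl k m ^ δ := by ring
        have hTmax : tl k m ^ δ ≤ d k m ^ δ + σ k m ^ δ := by
          rcases max_cases (d k m) (σ k m) with ⟨hmax, -⟩ | ⟨hmax, -⟩ <;>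
            rw [htl] <;> dsimp only <;> rw [hmax]
          · nlinarith [Real.rpow_nonneg (hσpos k m).le δ]
          · nlinarith [Real.rpow_nonneg (hd0 k m) δ]
        have hσδ : σ k m ^ δ ≤ η * w k * w m / (4 * len k + 1) := by
          have ha1 : σ k m ≤ (η * w k * w m / (4 * len k + 1)) ^ (1/δ) := min_le_right _ _
          have ha2 : σ k m ^ δ ≤ ((η * w k * w m / (4 * len k + 1)) ^ (1/δ)) ^ δ :=
            Real.rpow_le_rpow (hσpos k m).le ha1 hδ.le
          rwa [← Real.rpow_mul (by positivity), one_div_mul_cancel hδ.ne', Real.rpow_one] at ha2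
        have hfinal : 3 * len k * (η * w k * w m / (4 * len k + 1)) ≤ η * w k * w m := by
          have hX : (0:ℝ) < η * w k * w m := by positivity
          rw [mul_div_assoc']
          rw [div_le_iff₀ (by positivity)]
          nlinarith [mul_nonneg hX.le hL.le, hX, hL]
        have h3 : 3 * len k * tl k m ^ δ ≤ 3 * len k * d k m ^ δ + 3 * len k * σ k m ^ δ := by
          nlinarith
        have h4 : 3 * len k * σ k m ^ δ ≤ 3 * len k * (η * w k * w m / (4 * len k + 1)) := by
          nlinarith
        linarith
      calc ∑' i : ℕ, EMetric.diam (P (k, m, i)) ^ (δ + 1)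
          = ∑ i ∈ Finset.range (n k m), EMetric.diam (P (k, m, i)) ^ (δ + 1) := by
            refine tsum_eq_sum fun i hi => hPcost0 k m i ?_
            rintro ⟨-, hlt⟩
            exact hi (Finset.mem_range.2 hlt)
        _ ≤ ∑ i ∈ Finset.range (n k m), ENNReal.ofReal (tl k m) ^ (δ + 1) :=
            Finset.sum_le_sum fun i _ => ENNReal.rpow_le_rpow (hPdiam (k, m, i)) hδ1.le
        _ = (n k m) * ENNReal.ofReal (tl k m) ^ (δ + 1) := by
            rw [Finset.sum_const, Finset.card_range, nsmul_eq_mul]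
        _ = ENNReal.ofReal ((n k m) * tl k m ^ (δ + 1)) := by
            rw [ENNReal.ofReal_rpow_of_pos hT, ← ENNReal.ofReal_natCast (n k m),
              ← ENNReal.ofReal_mul (by positivity)]
        _ ≤ _ := ENNReal.ofReal_le_ofReal hrealineq
    -- per k estimate
    have h2 : ∀ k, ∑' (m : ℕ) (i : ℕ), EMetric.diam (P (k, m, i)) ^ (δ + 1)
        ≤ ENNReal.ofReal (3 * len k) * (b + η') + 2 * ENNReal.ofReal (η * w k) := by
      intro k
      have hof : ∀ m, ENNReal.ofReal (3 * len k * d k m ^ δ + η * w k * w m)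
          = ENNReal.ofReal (3 * len k) * EMetric.diam (S k m) ^ δ
            + ENNReal.ofReal (η * w k * w m) := by
        intro m
        rw [ENNReal.ofReal_add (by positivity) (by positivity),
          ENNReal.ofReal_mul (by positivity)]
        congr 1
        rw [← ENNReal.ofReal_rpow_of_nonneg (hd0 k m) hδ.le, ENNReal.ofReal_toReal (hSne k m)]
      calc ∑' (m : ℕ) (i : ℕ), EMetric.diam (P (k, m, i)) ^ (δ + 1)
          ≤ ∑' m : ℕ, ENNReal.ofReal (3 * len k * d k m ^ δ + η * w k * w m) :=
            ENNReal.tsum_le_tsum fun m => h1 k m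
        _ = ∑' m : ℕ, (ENNReal.ofReal (3 * len k) * EMetric.diam (S k m) ^ δ
              + ENNReal.ofReal (η * w k * w m)) := tsum_congr hof
        _ = ENNReal.ofReal (3 * len k) * (∑' m, EMetric.diam (S k m) ^ δ)
              + ∑' m : ℕ, ENNReal.ofReal (η * w k * w m) := by
            rw [ENNReal.tsum_add, ENNReal.tsum_mul_left]
        _ ≤ ENNReal.ofReal (3 * len k) * (b + η') + 2 * ENNReal.ofReal (η * w k) := by
            refine add_le_add (mul_le_mul_right (hSsum k) _) (le_of_eq ?_)
            simp only [hw]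
            exact tsum_ofReal_halves (η * (1/2:ℝ)^k) (by positivity)
    -- total estimate
    have hsum : ∑' j : ℕ, ⨆ _ : (P (E j)).Nonempty, EMetric.diam (P (E j)) ^ (δ + 1)
        ≤ 3 * (a + 3 * η') * (b + η') + 4 * η' := by
      calc ∑' j : ℕ, ⨆ _ : (P (E j)).Nonempty, EMetric.diam (P (E j)) ^ (δ + 1)
          = ∑' p : ℕ × ℕ × ℕ, ⨆ _ : (P p).Nonempty, EMetric.diam (P p) ^ (δ + 1) :=
            E.tsum_eq (fun p => ⨆ _ : (P p).Nonempty, EMetric.diam (P p) ^ (δ + 1))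
        _ ≤ ∑' p : ℕ × ℕ × ℕ, EMetric.diam (P p) ^ (δ + 1) :=
            ENNReal.tsum_le_tsum fun p => iSup_le fun _ => le_rfl
        _ = ∑' (k : ℕ) (m : ℕ) (i : ℕ), EMetric.diam (P (k, m, i)) ^ (δ + 1) := by
            rw [ENNReal.tsum_prod']
            exact tsum_congr fun k => ENNReal.tsum_prod'
        _ ≤ ∑' k : ℕ, (ENNReal.ofReal (3 * len k) * (b + η') + 2 * ENNReal.ofReal (η * w k)) :=
            ENNReal.tsum_le_tsum h2
        _ = (∑' k : ℕ, ENNReal.ofReal (3 * len k)) * (b + η')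
              + 2 * ∑' k : ℕ, ENNReal.ofReal (η * w k) := by
            rw [ENNReal.tsum_add, ENNReal.tsum_mul_right, ENNReal.tsum_mul_left]
        _ ≤ (3 * (a + 3 * η')) * (b + η') + 2 * (2 * η') := by
            refine add_le_add (mul_le_mul_left ?_ _) (mul_le_mul_right ?_ _)
            · calc ∑' k : ℕ, ENNReal.ofReal (3 * len k)
                  = 3 * ∑' k : ℕ, ENNReal.ofReal (len k) := by
                    rw [← ENNReal.tsum_mul_left]
                    refine tsum_congr fun k => ?_
                    rw [ENNReal.ofReal_mul (by norm_num), ENNReal.ofReal_ofNat]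
                _ ≤ 3 * ((a + η') + 2 * η') := by
                    refine mul_le_mul_right ?_ 3
                    calc ∑' k : ℕ, ENNReal.ofReal (len k)
                        ≤ ∑' k : ℕ, (EMetric.diam (t k) + ENNReal.ofReal (η * w k)) :=
                          ENNReal.tsum_le_tsum hlendiam
                      _ = (∑' k : ℕ, EMetric.diam (t k))
                            + ∑' k : ℕ, ENNReal.ofReal (η * w k) := ENNReal.tsum_add
                      _ ≤ (a + η') + 2 * η' := by
                          refine add_le_add htsum (le_of_eq ?_)
                          simp only [hw]
                          exact tsum_ofReal_halves η hη.le
                _ = 3 * (a + 3 * η') := by ring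
            · refine le_of_eq ?_
              simp only [hw]
              exact tsum_ofReal_halves η hη.le
        _ = 3 * (a + 3 * η') * (b + η') + 4 * η' := by ring
    exact iInf_le_of_le (fun j => P (E j)) (iInf_le_of_le hcov
      (iInf_le_of_le (fun j => hPr (E j)) hsum))
  rw [Measure.hausdorffMeasure_apply]
  refine iSup₂_le fun r hr => ?_
  refine ENNReal.le_of_forall_pos_le_add fun ζ hζ _ => ?_
  obtain ⟨η, hη, hle⟩ := arith hA hB hζ
  exact (key r hr η hη).trans hle

theorem hausdorff_measure_prod_le.{u} (δ : ℝ) (hδ : 0 < δ) :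
    ∃ C : ℝ, 0 < C ∧ ∀ (M : Type u) (ρ : M → M → ℝ), IsMetric ρ →
      ∀ A : Set ℝ, MeasurableSet A → ∀ B : Set M, hMeas ρ δ B < ∞ →
        hMeas (fun u v : ℝ × M => max |u.1 - v.1| (ρ u.2 v.2)) (δ + 1) (A ×ˢ B)
          ≤ ENNReal.ofReal C * hMeas (fun a b : ℝ => |a - b|) 1 A * hMeas ρ δ B := by
  refine ⟨3, by norm_num, ?_⟩
  intro M ρ hρ A _ B hB
  letI : MetricSpace M :=
    { dist := ρ
      dist_self := hρ.refl
      dist_comm := hρ.symm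
      dist_triangle := hρ.triangle
      eq_of_dist_eq_zero := fun {x y} h => hρ.eq_of_eq_zero x y h }
  letI : MeasurableSpace M := borel M
  haveI : BorelSpace M := ⟨rfl⟩
  have hδ1 : (0:ℝ) < δ + 1 := by linarith
  have hmB : hMeas ρ δ B = μH[δ] B := hMeas_eq ρ (fun x y => rfl) hδ B
  have hmA : hMeas (fun a b : ℝ => |a - b|) 1 A = μH[1] A :=
    hMeas_eq _ (fun x y => (Real.dist_eq x y).symm) one_pos A
  have hmAB : hMeas (fun u v : ℝ × M => max |u.1 - v.1| (ρ u.2 v.2)) (δ + 1) (A ×ˢ B)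
      = μH[δ + 1] (A ×ˢ B) :=
    hMeas_eq _ (fun u v => by rw [Prod.dist_eq, Real.dist_eq]; rfl) hδ1 _
  rw [hmB] at hB
  rw [hmB, hmA, hmAB]
  by_cases hA : μH[1] A = ∞
  · by_cases hb0 : μH[δ] B = 0
    · have hzero : μH[δ + 1] (A ×ˢ B) = 0 := by
        have hsub : A ×ˢ B ⊆ ⋃ z : ℤ, (Set.Icc (z : ℝ) (z + 1)) ×ˢ B := by
          rintro ⟨x, y⟩ ⟨hx, hy⟩
          exact Set.mem_iUnion.2 ⟨⌊x⌋,
            ⟨Set.mem_Icc.2 ⟨Int.floor_le x, (Int.lt_floor_add_one x).le⟩, hy⟩⟩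
        have hIcc : ∀ z : ℤ, μH[1] (Set.Icc (z : ℝ) (z + 1)) ≠ ∞ := by
          intro z
          rw [hausdorffMeasure_real]
          simp [Real.volume_Icc]
        refine le_antisymm ?_ zero_le
        calc μH[δ + 1] (A ×ˢ B)
            ≤ ∑' z : ℤ, μH[δ + 1] ((Set.Icc (z : ℝ) (z + 1)) ×ˢ B) :=
              (measure_mono hsub).trans (measure_iUnion_le _)
          _ ≤ ∑' z : ℤ, 3 * μH[1] (Set.Icc (z : ℝ) (z + 1)) * μH[δ] B :=
              ENNReal.tsum_le_tsum fun z => core δ hδ _ _ (hIcc z) hB.ne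
          _ = 0 := by simp [hb0]
      rw [hzero]
      exact zero_le
    · have htop : ENNReal.ofReal 3 * μH[1] A * μH[δ] B = ∞ := by
        rw [hA, ENNReal.mul_top (by simp), ENNReal.top_mul hb0]
      rw [htop]
      exact le_top
  · calc μH[δ + 1] (A ×ˢ B) ≤ 3 * μH[1] A * μH[δ] B := core δ hδ A B hA hB.ne
      _ = ENNReal.ofReal 3 * μH[1] A * μH[δ] B := by rw [ENNReal.ofReal_ofNat]
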